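/- arXiv:1705.07304 — 2 statements merged into one kernel-verified Lean document; each statement's English description precedes it below -/
import Mathlib

section
/- Let B be a building set on a nonempty finite set S. Then every maximal (by inclusion) nested set of B has the same cardinality, namely |S| - |B_max|. In particular, if B is connected, every maximal nested set of B has cardinality |S| - 1. -/
/-- A building set on a nonempty finite set `S`: a finite set of nonempty subsets of `S`
closed under unions of intersecting members, and containing all singletons. -/
def IsBuilding (S : Finset ℕ) (B : Finset (Finset ℕ)) : Prop :=
  (∀ I ∈ B, I ⊆ S ∧ I.Nonempty) ∧
  (∀ I ∈ B, ∀ J ∈ B, (I ∩ J).Nonempty → I ∪ J ∈ B) ∧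
  (∀ i ∈ S, ({i} : Finset ℕ) ∈ B)

/-- The set of maximal (by inclusion) elements of `B`. -/
def Bmax (B : Finset (Finset ℕ)) : Finset (Finset ℕ) :=
  B.filter (fun I => ∀ J ∈ B, I ⊆ J → I = J)

/-- The restriction `B|_C = {I ∈ B : I ⊆ C}`. -/
def restrict (B : Finset (Finset ℕ)) (C : Finset ℕ) : Finset (Finset ℕ) :=
  B.filter (fun I => I ⊆ C)

/-- `N` is a nested set of `B`: a subset of `B \ Bmax B` whose members are pairwise
nested or disjoint, such that no union of `k ≥ 2` pairwise disjoint members lies in `B`. -/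
def IsNested (B N : Finset (Finset ℕ)) : Prop :=
  N ⊆ B \ Bmax B ∧
  (∀ I ∈ N, ∀ J ∈ N, I ⊆ J ∨ J ⊆ I ∨ I ∩ J = ∅) ∧
  (∀ F ⊆ N, 2 ≤ F.card → (∀ I ∈ F, ∀ J ∈ F, I ≠ J → I ∩ J = ∅) → F.sup id ∉ B)

/-- `N` is a maximal (by inclusion) nested set of `B`. -/
def MaxNested (B N : Finset (Finset ℕ)) : Prop :=
  IsNested B N ∧ ∀ N' : Finset (Finset ℕ), IsNested B N' → N ⊆ N' → N = N'

section Aux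

variable {S : Finset ℕ} {B N : Finset (Finset ℕ)}

lemma mem_Bmax {I : Finset ℕ} : I ∈ Bmax B ↔ I ∈ B ∧ ∀ J ∈ B, I ⊆ J → I = J := by
  simp [Bmax]

lemma subset_sup {F : Finset (Finset ℕ)} {J : Finset ℕ} (hJ : J ∈ F) : J ⊆ F.sup id :=
  fun a ha => Finset.mem_sup.2 ⟨J, hJ, ha⟩

lemma sup_subset {F : Finset (Finset ℕ)} {I : Finset ℕ} (h : ∀ J ∈ F, J ⊆ I) :
    F.sup id ⊆ I := by
  intro a ha
  obtain ⟨J, hJ, haJ⟩ := Finset.mem_sup.1 ha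
  exact h J hJ haJ

lemma exists_le_bmax {I : Finset ℕ} (hI : I ∈ B) : ∃ C ∈ Bmax B, I ⊆ C := by
  obtain ⟨C, hC, hmax⟩ := (B.filter (fun J => I ⊆ J)).exists_max_image Finset.card
    ⟨I, by simp [hI]⟩
  rw [Finset.mem_filter] at hC
  refine ⟨C, mem_Bmax.2 ⟨hC.1, fun J hJ hCJ => ?_⟩, hC.2⟩
  exact Finset.eq_of_subset_of_card_le hCJ (hmax J (Finset.mem_filter.2 ⟨hJ, hC.2.trans hCJ⟩))

lemma bmax_disjoint (hB : IsBuilding S B) {C C' : Finset ℕ} (hC : C ∈ Bmax B)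
    (hC' : C' ∈ Bmax B) (h : C ≠ C') : C ∩ C' = ∅ := by
  by_contra hne
  have hint : (C ∩ C').Nonempty := Finset.nonempty_iff_ne_empty.2 hne
  rw [mem_Bmax] at hC hC'
  have hu : C ∪ C' ∈ B := hB.2.1 C hC.1 C' hC'.1 hint
  have h1 := hC.2 _ hu Finset.subset_union_left
  have h2 := hC'.2 _ hu Finset.subset_union_right
  exact h (h1.trans h2.symm)

lemma fam_subset_B (hN : IsNested B N) : N ∪ Bmax B ⊆ B := by
  intro I hI
  rcases Finset.mem_union.1 hI with h | h
  · exact (Finset.mem_sdiff.1 (hN.1 h)).1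
  · exact (mem_Bmax.1 h).1

/-- Members of the family `N ∪ Bmax B` are pairwise nested or disjoint. -/
lemma fam_nested (hB : IsBuilding S B) (hN : IsNested B N) :
    ∀ I ∈ N ∪ Bmax B, ∀ J ∈ N ∪ Bmax B, I ⊆ J ∨ J ⊆ I ∨ I ∩ J = ∅ := by
  have mixed : ∀ I ∈ N, ∀ J ∈ Bmax B, I ⊆ J ∨ J ⊆ I ∨ I ∩ J = ∅ := by
    intro I hI J hJ
    have hIB : I ∈ B := (Finset.mem_sdiff.1 (hN.1 hI)).1
    obtain ⟨C, hC, hIC⟩ := exists_le_bmax hIB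
    by_cases hCJ : C = J
    · exact Or.inl (hCJ ▸ hIC)
    · refine Or.inr (Or.inr ?_)
      have := bmax_disjoint hB hC hJ hCJ
      exact Finset.subset_empty.1 (this ▸ Finset.inter_subset_inter_right hIC)
  intro I hI J hJ
  rcases Finset.mem_union.1 hI with h1 | h1 <;> rcases Finset.mem_union.1 hJ with h2 | h2
  · exact hN.2.1 I h1 J h2
  · exact mixed I h1 J h2
  · rcases mixed J h2 I h1 with h | h | h
    · exact Or.inr (Or.inl h)
    · exact Or.inl h
    · exact Or.inr (Or.inr (by rwa [Finset.inter_comm]))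
  · by_cases h : I = J
    · exact Or.inl (h ▸ subset_rfl)
    · exact Or.inr (Or.inr (bmax_disjoint hB h1 h2 h))

/-- In a covering-nested family, every member of `P` lies in a maximal member of `P`. -/
lemma exists_maximal_above (P : Finset (Finset ℕ)) {J : Finset ℕ} (hJ : J ∈ P) :
    ∃ K ∈ P, J ⊆ K ∧ ∀ K' ∈ P, K ⊆ K' → K = K' := by
  obtain ⟨K, hK, hmax⟩ := (P.filter (fun K => J ⊆ K)).exists_max_image Finset.card
    ⟨J, by simp [hJ]⟩
  rw [Finset.mem_filter] at hK
  refine ⟨K, hK.1, hK.2, fun K' hK' hKK' => ?_⟩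
  exact Finset.eq_of_subset_of_card_le hKK'
    (hmax K' (Finset.mem_filter.2 ⟨hK', hK.2.trans hKK'⟩))

/-- Key lemma: every member of the family `N ∪ Bmax B` has a point lying in no
proper sub-member of the family. -/
lemma exists_private (hB : IsBuilding S B) (hN : IsNested B N) {I : Finset ℕ}
    (hI : I ∈ N ∪ Bmax B) : ∃ x ∈ I, ∀ J ∈ N ∪ Bmax B, x ∈ J → I ⊆ J := by
  have hIB : I ∈ B := fam_subset_B hN hI
  have hIne : I.Nonempty := (hB.1 I hIB).2
  by_contra h
  push_neg at h
  -- every point of I lies in a proper sub-member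
  classical
  set P : Finset (Finset ℕ) := (N ∪ Bmax B).filter (fun J => J ⊆ I ∧ J ≠ I) with hP
  have hcover : ∀ x ∈ I, ∃ J ∈ P, x ∈ J := by
    intro x hx
    obtain ⟨J, hJ, hxJ, hnsub⟩ := h x hx
    rcases fam_nested hB hN I hI J hJ with hs | hs | hs
    · exact absurd hs hnsub
    · refine ⟨J, Finset.mem_filter.2 ⟨hJ, hs, fun hJI => hnsub (hJI ▸ subset_rfl)⟩, hxJ⟩
    · exact absurd (Finset.mem_inter.2 ⟨hx, hxJ⟩) (by simp [hs])
  set F : Finset (Finset ℕ) := P.filter (fun J => ∀ K ∈ P, J ⊆ K → J = K) with hF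
  have hFP : F ⊆ P := Finset.filter_subset _ _
  have hcover2 : ∀ x ∈ I, ∃ J ∈ F, x ∈ J := by
    intro x hx
    obtain ⟨J, hJ, hxJ⟩ := hcover x hx
    obtain ⟨K, hK, hJK, hmax⟩ := exists_maximal_above P hJ
    exact ⟨K, Finset.mem_filter.2 ⟨hK, hmax⟩, hJK hxJ⟩
  have hFN : F ⊆ N := by
    intro J hJ
    have hJP := hFP hJ
    rw [Finset.mem_filter] at hJP
    rcases Finset.mem_union.1 hJP.1 with h1 | h1
    · exact h1
    · exact absurd ((mem_Bmax.1 h1).2 I hIB hJP.2.1) hJP.2.2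
  have hdisj : ∀ J ∈ F, ∀ K ∈ F, J ≠ K → J ∩ K = ∅ := by
    intro J hJ K hK hne
    have hJ' := Finset.mem_filter.1 hJ
    have hK' := Finset.mem_filter.1 hK
    rcases fam_nested hB hN J (Finset.mem_filter.1 (hFP hJ)).1
      K (Finset.mem_filter.1 (hFP hK)).1 with hs | hs | hs
    · exact absurd (hJ'.2 K (hFP hK) hs) hne
    · exact absurd (hK'.2 J (hFP hJ) hs) (Ne.symm hne)
    · exact hs
  have hsup : F.sup id = I := by
    apply Finset.Subset.antisymm
    · exact sup_subset fun J hJ => (Finset.mem_filter.1 (hFP hJ)).2.1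
    · intro x hx
      obtain ⟨J, hJ, hxJ⟩ := hcover2 x hx
      exact Finset.mem_sup.2 ⟨J, hJ, hxJ⟩
  have hcard : 2 ≤ F.card := by
    have h1 : 1 ≤ F.card := by
      obtain ⟨x, hx⟩ := hIne
      obtain ⟨J, hJ, _⟩ := hcover2 x hx
      exact Finset.card_pos.2 ⟨J, hJ⟩
    have h2 : F.card ≠ 1 := by
      intro hc
      rw [Finset.card_eq_one] at hc
      obtain ⟨J, hJ⟩ := hc
      have hJF : J ∈ F := by simp [hJ]
      have hJP := Finset.mem_filter.1 (hFP hJF)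
      apply hJP.2.2
      have : F.sup id = J := by rw [hJ]; simp
      rw [← hsup, this]
    omega
  exact hN.2.2 F hFN hcard hdisj (by rw [hsup]; exact hIB)

/-- Every point of `S` has a minimal member of the family containing it. -/
lemma exists_minimal_mem (hB : IsBuilding S B) (hN : IsNested B N) {x : ℕ} (hx : x ∈ S) :
    ∃ I ∈ N ∪ Bmax B, x ∈ I ∧ ∀ J ∈ N ∪ Bmax B, x ∈ J → I ⊆ J := by
  classical
  have hxB : ({x} : Finset ℕ) ∈ B := hB.2.2 x hx
  obtain ⟨C, hC, hxC⟩ := exists_le_bmax hxB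
  have hne : ((N ∪ Bmax B).filter (fun J => x ∈ J)).Nonempty :=
    ⟨C, Finset.mem_filter.2 ⟨Finset.mem_union_right _ hC, hxC (Finset.mem_singleton_self x)⟩⟩
  obtain ⟨I, hI, hmin⟩ := ((N ∪ Bmax B).filter (fun J => x ∈ J)).exists_min_image
    Finset.card hne
  rw [Finset.mem_filter] at hI
  refine ⟨I, hI.1, hI.2, fun J hJ hxJ => ?_⟩
  rcases fam_nested hB hN I hI.1 J hJ with hs | hs | hs
  · exact hs
  · have := hmin J (Finset.mem_filter.2 ⟨hJ, hxJ⟩)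
    have hJI := Finset.eq_of_subset_of_card_le hs this
    rw [hJI]
  · exact absurd (Finset.mem_inter.2 ⟨hI.2, hxJ⟩) (by simp [hs])

end Aux

/-- Every maximal nested set of a building set `B` on `S` has cardinality
`|S| - |Bmax B|`; in particular, if `B` is connected, it has cardinality `|S| - 1`. -/
theorem stmt_0 (S : Finset ℕ) (hS : S.Nonempty) (B : Finset (Finset ℕ))
    (hB : IsBuilding S B) (N : Finset (Finset ℕ)) (hN : MaxNested B N) :
    N.card = S.card - (Bmax B).card ∧
    (Bmax B = {S} → N.card = S.card - 1) := by
  classical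
  obtain ⟨hNested, hMax⟩ := hN
  -- Upper bound : |N ∪ Bmax B| ≤ |S|
  have key : ∀ I, I ∈ N ∪ Bmax B → ∃ x, x ∈ I ∧ ∀ J ∈ N ∪ Bmax B, x ∈ J → I ⊆ J := by
    intro I hI
    obtain ⟨x, hx1, hx2⟩ := exists_private hB hNested hI
    exact ⟨x, hx1, hx2⟩
  choose! φ hφ1 hφ2 using key
  have hub : (N ∪ Bmax B).card ≤ S.card := by
    apply Finset.card_le_card_of_injOn φ
    · intro I hI
      exact (hB.1 I (fam_subset_B hNested hI)).1 (hφ1 I hI)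
    · intro I hI J hJ hIJ
      simp only [Finset.mem_coe] at hI hJ
      have h1 : I ⊆ J := hφ2 I hI J hJ (by rw [hIJ]; exact hφ1 J hJ)
      have h2 : J ⊆ I := hφ2 J hJ I hI (by rw [← hIJ]; exact hφ1 I hI)
      exact Finset.Subset.antisymm h1 h2
  -- Equality via maximality
  have heq : (N ∪ Bmax B).card = S.card := by
    by_contra hne
    have hlt : (N ∪ Bmax B).card < S.card := lt_of_le_of_ne hub hne
    have keymin : ∀ z, z ∈ S → ∃ I, I ∈ N ∪ Bmax B ∧ z ∈ I ∧
        ∀ J ∈ N ∪ Bmax B, z ∈ J → I ⊆ J := by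
      intro z hz
      obtain ⟨I, hI, h1, h2⟩ := exists_minimal_mem hB hNested hz
      exact ⟨I, hI, h1, h2⟩
    choose! ψ hψ1 hψ2 hψ3 using keymin
    obtain ⟨x, hxS, y, hyS, hxy, hψeq⟩ :=
      Finset.exists_ne_map_eq_of_card_lt_of_maps_to hlt (fun z hz => hψ1 z hz)
    set I : Finset ℕ := ψ x with hIdef
    have hIfam : I ∈ N ∪ Bmax B := hψ1 x hxS
    have hIB : I ∈ B := fam_subset_B hNested hIfam
    have hxI : x ∈ I := hψ2 x hxS
    have hyI : y ∈ I := by rw [hψeq]; exact hψ2 y hyS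
    have hxmin : ∀ J ∈ N ∪ Bmax B, x ∈ J → I ⊆ J := hψ3 x hxS
    have hymin : ∀ J ∈ N ∪ Bmax B, y ∈ J → I ⊆ J := by
      intro J hJ hyJ
      rw [hψeq]
      exact hψ3 y hyS J hJ hyJ
    -- The maximum M of {J ∈ B : x ∈ J ⊆ I, y ∉ J}
    set T : Finset (Finset ℕ) := B.filter (fun J => x ∈ J ∧ J ⊆ I ∧ y ∉ J) with hTdef
    have hxT : ({x} : Finset ℕ) ∈ T := by
      refine Finset.mem_filter.2 ⟨hB.2.2 x hxS, Finset.mem_singleton_self x, ?_, ?_⟩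
      · simpa using hxI
      · simp [Ne.symm hxy]
    obtain ⟨M, hMT, hMmax⟩ := T.exists_max_image Finset.card ⟨_, hxT⟩
    rw [Finset.mem_filter] at hMT
    obtain ⟨hMB, hxM, hMI, hyM⟩ := hMT
    have hMtop : ∀ J ∈ T, J ⊆ M := by
      intro J hJ
      rw [Finset.mem_filter] at hJ
      have hu : J ∪ M ∈ B := hB.2.1 J hJ.1 M hMB ⟨x, Finset.mem_inter.2 ⟨hJ.2.1, hxM⟩⟩
      have huT : J ∪ M ∈ T := Finset.mem_filter.2 ⟨hu, Finset.mem_union_left _ hJ.2.1,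
        Finset.union_subset hJ.2.2.1 hMI, by simp [hJ.2.2.2, hyM]⟩
      have heq' := Finset.eq_of_subset_of_card_le Finset.subset_union_right (hMmax _ huT)
      intro a ha
      rw [heq']
      exact Finset.mem_union_left _ ha
    have hMneI : M ≠ I := fun h => hyM (h ▸ hyI)
    have hMnmax : M ∉ Bmax B := by
      intro h
      exact hMneI ((mem_Bmax.1 h).2 I hIB hMI)
    have hMnN : M ∉ N := by
      intro h
      have := hxmin M (Finset.mem_union_left _ h) hxM
      exact hMneI (Finset.Subset.antisymm hMI this)
    -- N ∪ {M} is nested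
    have hN' : IsNested B (insert M N) := by
      refine ⟨?_, ?_, ?_⟩
      · intro K hK
        rcases Finset.mem_insert.1 hK with h | h
        · exact Finset.mem_sdiff.2 ⟨h ▸ hMB, h ▸ hMnmax⟩
        · exact hNested.1 h
      · -- pairwise nested or disjoint
        have aux : ∀ K ∈ N, M ⊆ K ∨ K ⊆ M ∨ M ∩ K = ∅ := by
          intro K hK
          by_cases hMK : M ∩ K = ∅
          · exact Or.inr (Or.inr hMK)
          have hKfam : K ∈ N ∪ Bmax B := Finset.mem_union_left _ hK
          obtain ⟨z, hz⟩ := Finset.nonempty_iff_ne_empty.2 hMK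
          rw [Finset.mem_inter] at hz
          rcases fam_nested hB hNested K hKfam I hIfam with hs | hs | hs
          · -- K ⊆ I
            by_cases hKI : K = I
            · exact Or.inl (hKI ▸ hMI)
            have hxK : x ∉ K := fun hxK =>
              hKI (Finset.Subset.antisymm hs (hxmin K hKfam hxK))
            have hyK : y ∉ K := fun hyK =>
              hKI (Finset.Subset.antisymm hs (hymin K hKfam hyK))
            have hu : K ∪ M ∈ B := hB.2.1 K (fam_subset_B hNested hKfam) M hMB
              ⟨z, Finset.mem_inter.2 ⟨hz.2, hz.1⟩⟩
            have huT : K ∪ M ∈ T := Finset.mem_filter.2 ⟨hu, Finset.mem_union_right _ hxM,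
              Finset.union_subset hs hMI, by simp [hyK, hyM]⟩
            exact Or.inr (Or.inl ((Finset.subset_union_left).trans (hMtop _ huT)))
          · exact Or.inl (hMI.trans hs)
          · exact absurd (Finset.mem_inter.2 ⟨hz.2, hMI hz.1⟩) (by simp [hs])
        intro A hA A' hA'
        rcases Finset.mem_insert.1 hA with h1 | h1 <;> rcases Finset.mem_insert.1 hA' with h2 | h2
        · exact Or.inl (h1 ▸ h2 ▸ subset_rfl)
        · subst h1
          exact aux A' h2
        · subst h2
          rcases aux A h1 with h | h | h
          · exact Or.inr (Or.inl h)
          · exact Or.inl h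
          · exact Or.inr (Or.inr (by rwa [Finset.inter_comm]))
        · exact hNested.2.1 A h1 A' h2
      · -- no disjoint union in B
        intro F hF hFcard hFdisj
        by_cases hMF : M ∈ F
        swap
        · exact hNested.2.2 F (fun K hK => ((Finset.mem_insert.1 (hF hK)).resolve_left
            (fun h => hMF (h ▸ hK)))) hFcard hFdisj
        intro hUB
        set G : Finset (Finset ℕ) := F.erase M with hGdef
        have hGN : G ⊆ N := by
          intro K hK
          have hK' := Finset.mem_erase.1 hK
          exact (Finset.mem_insert.1 (hF hK'.2)).resolve_left hK'.1
        have hGne : G.Nonempty := by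
          rw [← Finset.card_pos, Finset.card_erase_of_mem hMF]
          omega
        have hGdisjM : ∀ K ∈ G, K ∩ M = ∅ := by
          intro K hK
          have hK' := Finset.mem_erase.1 hK
          exact hFdisj K hK'.2 M hMF hK'.1
        have hxG : ∀ K ∈ G, x ∉ K := by
          intro K hK hxK
          have := hGdisjM K hK
          exact absurd (Finset.mem_inter.2 ⟨hxK, hxM⟩) (by simp [this])
        have hKalt : ∀ K ∈ G, (K ⊆ I ∧ K ≠ I ∧ y ∉ K) ∨ K ∩ I = ∅ := by
          intro K hK
          have hKfam : K ∈ N ∪ Bmax B := Finset.mem_union_left _ (hGN hK)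
          rcases fam_nested hB hNested K hKfam I hIfam with hs | hs | hs
          · left
            have hKI : K ≠ I := fun h => hxG K hK (h ▸ hxI)
            refine ⟨hs, hKI, fun hyK => hKI (Finset.Subset.antisymm hs (hymin K hKfam hyK))⟩
          · exact absurd (hs hxI) (hxG K hK)
          · exact Or.inr hs
        set U : Finset ℕ := F.sup id with hUdef
        have hMU : M ⊆ U := subset_sup hMF
        have hxU : x ∈ U := hMU hxM
        have hUI : U ∪ I ∈ B := hB.2.1 U hUB I hIB ⟨x, Finset.mem_inter.2 ⟨hxU, hxI⟩⟩
        set G2 : Finset (Finset ℕ) := G.filter (fun K => ¬ K ⊆ I) with hG2def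
        have hG2disj : ∀ K ∈ G2, K ∩ I = ∅ := by
          intro K hK
          have hK' := Finset.mem_filter.1 hK
          rcases hKalt K hK'.1 with h | h
          · exact absurd h.1 hK'.2
          · exact h
        -- U ∪ I equals I ∪ sup G2
        have hUIeq : U ∪ I = (insert I G2).sup id := by
          apply Finset.Subset.antisymm
          · intro a ha
            rcases Finset.mem_union.1 ha with h | h
            · obtain ⟨K, hK, haK⟩ := Finset.mem_sup.1 h
              by_cases hKM : K = M
              · exact Finset.mem_sup.2 ⟨I, Finset.mem_insert_self _ _, hMI (hKM ▸ haK)⟩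
              have hKG : K ∈ G := Finset.mem_erase.2 ⟨hKM, hK⟩
              by_cases hKI : K ⊆ I
              · exact Finset.mem_sup.2 ⟨I, Finset.mem_insert_self _ _, hKI haK⟩
              · exact Finset.mem_sup.2 ⟨K, Finset.mem_insert_of_mem
                  (Finset.mem_filter.2 ⟨hKG, hKI⟩), haK⟩
            · exact Finset.mem_sup.2 ⟨I, Finset.mem_insert_self _ _, h⟩
          · refine sup_subset fun K hK => ?_
            rcases Finset.mem_insert.1 hK with h | h
            · exact h ▸ Finset.subset_union_right
            · have hKF : K ∈ F := (Finset.mem_erase.1 (Finset.mem_filter.1 h).1).2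
              exact (subset_sup hKF).trans Finset.subset_union_left
        have hG2empty : G2 = ∅ := by
          by_contra hG2ne
          have hG2ne' : G2.Nonempty := Finset.nonempty_iff_ne_empty.2 hG2ne
          have hInG2 : I ∉ G2 := by
            intro h
            have := hG2disj I h
            simp only [Finset.inter_self] at this
            exact absurd (this ▸ hxI) (by simp)
          rcases Finset.mem_union.1 hIfam with hIN | hImax
          · -- I ∈ N : contradiction with nestedness of N
            refine hNested.2.2 (insert I G2) ?_ ?_ ?_ (hUIeq ▸ hUI)
            · intro K hK
              rcases Finset.mem_insert.1 hK with h | h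
              · exact h ▸ hIN
              · exact hGN (Finset.mem_filter.1 h).1
            · rw [Finset.card_insert_of_notMem hInG2]
              have := Finset.card_pos.2 hG2ne'
              omega
            · intro A hA A' hA' hAA'
              rcases Finset.mem_insert.1 hA with h1 | h1 <;>
                rcases Finset.mem_insert.1 hA' with h2 | h2
              · exact absurd (h1.trans h2.symm) hAA'
              · subst h1
                rw [Finset.inter_comm]
                exact hG2disj A' h2
              · subst h2
                exact hG2disj A h1
              · have hA1 : A ∈ F := (Finset.mem_erase.1 (Finset.mem_filter.1 h1).1).2
                have hA2 : A' ∈ F := (Finset.mem_erase.1 (Finset.mem_filter.1 h2).1).2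
                exact hFdisj A hA1 A' hA2 hAA'
          · -- I ∈ Bmax B : then U ∪ I = I, so G2 = ∅
            have hIeq : I = U ∪ I := (mem_Bmax.1 hImax).2 _ hUI Finset.subset_union_right
            obtain ⟨K, hK⟩ := hG2ne'
            have hKni : ¬ K ⊆ I := (Finset.mem_filter.1 hK).2
            apply hKni
            have hKU : K ⊆ U := subset_sup
              (Finset.mem_erase.1 (Finset.mem_filter.1 hK).1).2
            intro a ha
            have : a ∈ U ∪ I := Finset.mem_union_left _ (hKU ha)
            rw [← hIeq] at this
            exact this
        -- now every member of G is ⊆ I and misses y, so U ∈ T, contradiction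
        have hGI : ∀ K ∈ G, K ⊆ I ∧ y ∉ K := by
          intro K hK
          have hKI : K ⊆ I := by
            by_contra h
            have : K ∈ G2 := Finset.mem_filter.2 ⟨hK, h⟩
            simp [hG2empty] at this
          rcases hKalt K hK with h | h
          · exact ⟨hKI, h.2.2⟩
          · obtain ⟨k, hk⟩ := (hB.1 K ((Finset.mem_sdiff.1 (hNested.1 (hGN hK))).1)).2
            exact absurd (Finset.mem_inter.2 ⟨hk, hKI hk⟩) (by simp [h])
        have hUsubI : U ⊆ I := by
          refine sup_subset fun K hK => ?_
          by_cases hKM : K = M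
          · exact hKM ▸ hMI
          · exact (hGI K (Finset.mem_erase.2 ⟨hKM, hK⟩)).1
        have hyU : y ∉ U := by
          intro hyU
          obtain ⟨K, hK, hyK⟩ := Finset.mem_sup.1 hyU
          by_cases hKM : K = M
          · exact hyM (hKM ▸ hyK)
          · exact (hGI K (Finset.mem_erase.2 ⟨hKM, hK⟩)).2 hyK
        have hUT : U ∈ T := Finset.mem_filter.2 ⟨hUB, hxU, hUsubI, hyU⟩
        have hUM : U ⊆ M := hMtop U hUT
        obtain ⟨K, hK⟩ := hGne
        obtain ⟨k, hk⟩ := (hB.1 K ((Finset.mem_sdiff.1 (hNested.1 (hGN hK))).1)).2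
        have hkM : k ∈ M := hUM (subset_sup (Finset.mem_erase.1 hK).2 hk)
        exact absurd (Finset.mem_inter.2 ⟨hk, hkM⟩) (by simp [hGdisjM K hK])
    have heqN := hMax (insert M N) hN' (Finset.subset_insert _ _)
    apply hMnN
    rw [heqN]
    exact Finset.mem_insert_self M N
  -- Conclude
  have hdisjNB : Disjoint N (Bmax B) := by
    rw [Finset.disjoint_left]
    intro I hI hI'
    exact (Finset.mem_sdiff.1 (hNested.1 hI)).2 hI'
  have hcardsum : N.card + (Bmax B).card = S.card := by
    rw [← Finset.card_union_of_disjoint hdisjNB]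
    exact heq
  constructor
  · omega
  · intro h
    have : (Bmax B).card = 1 := by rw [h]; simp
    omega
end

section
/- Let B be a connected building set on S = {1, …, n+1}. Suppose that for all I_1, I_2 ∈ B with I_1 ∩ I_2 ≠ ∅, I_1 ⊄ I_2 and I_2 ⊄ I_1, at least one of the following holds: (i) I_1 ∩ I_2 ∈ B; (ii) I_1 ∪ I_2 = S and |(B|_{I_1 ∩ I_2})_max| ≤ 2. Then for every nested set N of B, every pair of distinct I_1, I_2 ∈ B \ {S} such that N ∪ {I_1} and N ∪ {I_2} are both maximal nested sets of B, and every family of integers (a_J)_{J ∈ N} satisfying e_{I_1} + e_{I_2} + Σ_{J ∈ N} a_J e_J = 0 in ℝ^n, one has 2 + Σ_{J ∈ N} a_J ≥ 0. -/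
/-- For `S = {1, …, n+1}`: `eVec n i` is the `i`-th standard basis vector of `ℝ^n`
for `1 ≤ i ≤ n`, and `eVec n (n+1) = -e_1 - ⋯ - e_n`. -/
def eVec (n : ℕ) (i : ℕ) : Fin n → ℝ :=
  fun j => if i = (j : ℕ) + 1 then 1 else if i = n + 1 then -1 else 0

/-- `eSet n I = ∑ i ∈ I, e_i`. -/
def eSet (n : ℕ) (I : Finset ℕ) : Fin n → ℝ := ∑ i ∈ I, eVec n i

/-!
The vectors `e_J`, `J ∈ N`, are linearly independent: every member of a nested set has a point
lying in no smaller member, and some point of `S` lies in no member at all. So it suffices to write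
`e_{I₁} + e_{I₂}` as one combination of them with coefficient sum at most `2`.

If `I₁, I₂ ∈ N` this is immediate. If `I₁` and `I₂` are compatible, `N ∪ {I₁, I₂}` is not
nested, so the disjoint union `V` of the blocks `I₁, I₂` and some `K_i ∈ N` lies in `B`. For such a
`V` of maximal size, either `V = S` or `N ∪ {I₁, V}` is nested, whence `V ∈ N`; and
`e_{I₁} + e_{I₂} = e_V - ∑ e_{K_i}`.
If `I₁` and `I₂` cross, then `e_{I₁} + e_{I₂} = e_{I₁ ∪ I₂} + ∑ e_Q` over the maximal
`Q ∈ B|_{I₁ ∩ I₂}`, and each such `Q` lies in `N`. In case (i), `I₁ ∩ I₂` is the only `Q`, and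
`e_{I₁ ∪ I₂}` is treated like `e_{I₁} + e_{I₂}` above, with the single block `I₁ ∪ I₂`. In case
(ii), `e_{I₁ ∪ I₂} = e_S = 0` and there are at most two `Q`.
-/

open Finset

section

variable {S : Finset ℕ} {B M N R F G H T : Finset (Finset ℕ)} {A I J P Q V X Y I₁ I₂ : Finset ℕ}
  {n : ℕ} {v v' : Fin n → ℝ} {w w' : ℝ}

def Compatible (I J : Finset ℕ) : Prop := I ⊆ J ∨ J ⊆ I ∨ Disjoint I J

lemma Compatible.symm (h : Compatible I J) : Compatible J I := by
  rcases h with h | h | h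
  exacts [Or.inr (Or.inl h), Or.inl h, Or.inr (Or.inr h.symm)]

lemma Compatible.union (h₁ : Compatible I₁ J) (h₂ : Compatible I₂ J) (h : ¬Disjoint I₁ I₂) :
    Compatible (I₁ ∪ I₂) J := by
  rcases h₁ with h₁ | h₁ | h₁
  · rcases h₂ with h₂ | h₂ | h₂
    · exact Or.inl (union_subset h₁ h₂)
    · exact Or.inr (Or.inl (h₂.trans subset_union_right))
    · exact absurd (h₂.mono_right h₁).symm h
  · exact Or.inr (Or.inl (h₁.trans subset_union_left))
  · rcases h₂ with h₂ | h₂ | h₂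
    · exact absurd (h₁.mono_right h₂) h
    · exact Or.inr (Or.inl (h₂.trans subset_union_right))
    · exact Or.inr (Or.inr (disjoint_union_left.2 ⟨h₁, h₂⟩))

lemma mem_bmax_iff : I ∈ Bmax T ↔ Maximal (· ∈ T) I := by
  simp only [Bmax, mem_filter, Maximal]
  exact and_congr_right fun _ => forall₂_congr fun J hJ =>
    ⟨fun h hIJ => (h hIJ).ge, fun h hIJ => hIJ.antisymm (h hIJ)⟩

lemma exists_subset_mem_bmax (hI : I ∈ T) : ∃ Q ∈ Bmax T, I ⊆ Q := by
  obtain ⟨Q, hIQ, hQ⟩ := T.exists_le_maximal hI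
  exact ⟨Q, mem_bmax_iff.2 hQ, hIQ⟩

lemma sup_bmax (T : Finset (Finset ℕ)) : (Bmax T).sup id = T.sup id := by
  refine le_antisymm (sup_mono (filter_subset _ _)) (Finset.sup_le fun I hI => ?_)
  obtain ⟨Q, hQ, hIQ⟩ := exists_subset_mem_bmax hI
  exact hIQ.trans (le_sup (f := id) hQ)

lemma pairwiseDisjoint_bmax (hT : ∀ I ∈ T, ∀ J ∈ T, ¬Disjoint I J → I ∪ J ∈ T) :
    (Bmax T : Set (Finset ℕ)).PairwiseDisjoint id := by
  intro I hI J hJ hIJ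
  rw [mem_coe, mem_bmax_iff] at hI hJ
  by_contra h
  have hU := hT I hI.1 J hJ.1 h
  exact hIJ ((hI.eq_of_le hU subset_union_left).trans (hJ.eq_of_le hU subset_union_right).symm)

lemma notMem_bmax_of_ssubset (hJ : J ∈ B) (h : I ⊂ J) : I ∉ Bmax B :=
  fun hI => h.ne ((mem_filter.1 hI).2 J hJ h.subset)

lemma IsBuilding.nonempty (hB : IsBuilding S B) (hI : I ∈ B) : I.Nonempty := (hB.1 I hI).2

lemma IsBuilding.union_mem (hB : IsBuilding S B) (hI : I ∈ B) (hJ : J ∈ B) (h : ¬Disjoint I J) :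
    I ∪ J ∈ B :=
  hB.2.1 I hI J hJ (not_disjoint_iff_nonempty_inter.1 h)

lemma mem_restrict : I ∈ restrict B P ↔ I ∈ B ∧ I ⊆ P := mem_filter

lemma mem_bmax_restrict_self (hP : P ∈ B) : P ∈ Bmax (restrict B P) :=
  mem_filter.2 ⟨mem_restrict.2 ⟨hP, subset_rfl⟩, fun _ hJ hPJ => hPJ.antisymm (mem_restrict.1 hJ).2⟩

lemma sup_bmax_restrict (hB : IsBuilding S B) (hP : P ⊆ S) : (Bmax (restrict B P)).sup id = P := by
  rw [sup_bmax]
  refine le_antisymm (Finset.sup_le fun I hI => (mem_restrict.1 hI).2) fun i hi => ?_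
  have hi' : {i} ∈ restrict B P := mem_restrict.2 ⟨hB.2.2 i (hP hi), singleton_subset_iff.2 hi⟩
  exact le_sup (f := id) hi' (mem_singleton_self i)

lemma pairwiseDisjoint_bmax_restrict (hB : IsBuilding S B) :
    (Bmax (restrict B P) : Set (Finset ℕ)).PairwiseDisjoint id :=
  pairwiseDisjoint_bmax fun I hI J hJ h => by
    rw [mem_restrict] at hI hJ ⊢
    exact ⟨hB.union_mem hI.1 hJ.1 h, union_subset hI.2 hJ.2⟩

lemma subset_or_disjoint_of_mem_bmax_restrict (hB : IsBuilding S B) (hQ : Q ∈ Bmax (restrict B P))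
    (hJ : J ∈ B) (hJP : J ⊆ P) : J ⊆ Q ∨ Disjoint J Q := by
  rw [mem_bmax_iff] at hQ
  by_cases h : Disjoint J Q
  · exact Or.inr h
  obtain ⟨hQB, hQP⟩ := mem_restrict.1 hQ.1
  have hJQ : J ∪ Q ∈ restrict B P :=
    mem_restrict.2 ⟨hB.union_mem hJ hQB h, union_subset hJP hQP⟩
  exact Or.inl (subset_union_left.trans (hQ.eq_of_le hJQ subset_union_right).ge)

lemma isNested_iff : IsNested B M ↔ M ⊆ B \ Bmax B ∧ (∀ I ∈ M, ∀ J ∈ M, Compatible I J) ∧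
    ∀ F ⊆ M, (F : Set (Finset ℕ)).PairwiseDisjoint id → F.sup id ∈ B → F.card ≤ 1 := by
  simp only [IsNested, Compatible, Set.PairwiseDisjoint, Set.Pairwise, Function.onFun, mem_coe,
    id, disjoint_iff_inter_eq_empty]
  refine and_congr_right fun _ => and_congr_right fun _ => forall₂_congr fun F _ => ?_
  constructor
  · intro h hd hB
    by_contra h2
    exact h (by omega) hd hB
  · intro h h2 hd hB
    have := h hd hB
    omega

lemma IsNested.mem (hM : IsNested B M) (hI : I ∈ M) : I ∈ B := (mem_sdiff.1 (hM.1 hI)).1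

lemma IsNested.compatible (hM : IsNested B M) (hI : I ∈ M) (hJ : J ∈ M) : Compatible I J :=
  (isNested_iff.1 hM).2.1 I hI J hJ

lemma IsNested.card_le_one (hM : IsNested B M) (hF : F ⊆ M)
    (hd : (F : Set (Finset ℕ)).PairwiseDisjoint id) (hsup : F.sup id ∈ B) : F.card ≤ 1 :=
  (isNested_iff.1 hM).2.2 F hF hd hsup

lemma IsNested.mono (hM : IsNested B M) (h : N ⊆ M) : IsNested B N := by
  rw [isNested_iff] at hM ⊢
  exact ⟨h.trans hM.1, fun I hI J hJ => hM.2.1 I (h hI) J (h hJ),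
    fun F hF => hM.2.2 F (hF.trans h)⟩

lemma IsNested.insert_of_compatible (hM : IsNested B M) (hX : X ∈ B \ Bmax B)
    (hcomp : ∀ J ∈ M, Compatible X J)
    (hdisj : ∀ G ⊆ M, G.Nonempty → (G : Set (Finset ℕ)).PairwiseDisjoint id →
      (∀ K ∈ G, Disjoint X K) → X ∪ G.sup id ∉ B) :
    IsNested B (insert X M) := by
  refine isNested_iff.2 ⟨insert_subset hX hM.1, ?_, fun F hF hd hsup => ?_⟩
  · simp only [forall_mem_insert]
    exact ⟨⟨Or.inl subset_rfl, hcomp⟩, fun I hI =>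
      ⟨(hcomp I hI).symm, fun J hJ => hM.compatible hI hJ⟩⟩
  by_cases hXF : X ∈ F
  · by_contra h2
    have hG : (F.erase X).Nonempty := by
      rw [← card_pos, card_erase_of_mem hXF]
      omega
    refine hdisj (F.erase X) (fun K hK => ?_) hG (hd.subset (by simp)) (fun K hK => ?_) ?_
    · exact (mem_insert.1 (hF (mem_of_mem_erase hK))).resolve_left (ne_of_mem_erase hK)
    · exact hd hXF (mem_of_mem_erase hK) (ne_of_mem_erase hK).symm
    · have hsplit : F.sup id = X ∪ (F.erase X).sup id := by
        conv_lhs => rw [← insert_erase hXF]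
        rw [sup_insert]
        rfl
      rwa [← hsplit]
  · exact hM.card_le_one ((subset_insert_iff_of_notMem hXF).1 hF) hd hsup

lemma MaxNested.mem_of_isNested_insert (hM : MaxNested B M) (h : IsNested B (insert X M)) :
    X ∈ M := by
  rw [hM.2 _ h (subset_insert X M)]
  exact mem_insert_self X M

lemma pairwiseDisjoint_insert_filter_disjoint (hH : (H : Set (Finset ℕ)).PairwiseDisjoint id)
    (Y : Finset ℕ) :
    (↑(insert Y (H.filter (Disjoint · Y))) : Set (Finset ℕ)).PairwiseDisjoint id := by
  rw [coe_insert, coe_filter]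
  exact (hH.subset fun K hK => hK.1).insert fun K hK _ => hK.2.symm

lemma sup_insert_filter_disjoint (hcomp : ∀ K ∈ H, K ⊆ Y ∨ Disjoint K Y) :
    (insert Y (H.filter (Disjoint · Y))).sup id = Y ∪ H.sup id := by
  rw [sup_insert, id]
  refine le_antisymm (sup_le_sup_left (sup_mono (filter_subset _ _)) _)
    (sup_le le_sup_left (Finset.sup_le fun K hK => ?_))
  rcases hcomp K hK with h | h
  · exact h.trans le_sup_left
  · exact (le_sup (f := id) (mem_filter.2 ⟨hK, h⟩)).trans le_sup_right

/-- Otherwise `Y` and the members of `H` disjoint from it would form a forbidden disjoint family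
of `M`, with union `Y ∪ ⋃ H ∈ B`. -/
lemma IsNested.forall_subset_of_sup_mem (hB : IsBuilding S B) (hM : IsNested B M) (hY : Y ∈ M)
    (hH : (H : Set (Finset ℕ)).PairwiseDisjoint id) (hHM : ∀ K ∈ H, Disjoint K Y → K ∈ M)
    (hcomp : ∀ K ∈ H, K ⊆ Y ∨ Disjoint K Y) (hsup : H.sup id ∈ B)
    (hmeet : ¬Disjoint Y (H.sup id)) :
    ∀ K ∈ H, K ⊆ Y := by
  by_contra! ⟨K, hK, hKY⟩
  have hle := hM.card_le_one (F := insert Y (H.filter (Disjoint · Y)))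
    (insert_subset hY fun L hL => hHM L (mem_filter.1 hL).1 (mem_filter.1 hL).2)
    (pairwiseDisjoint_insert_filter_disjoint hH Y)
    (by rw [sup_insert_filter_disjoint hcomp]; exact hB.union_mem (hM.mem hY) hsup hmeet)
  have hKmem : K ∈ insert Y (H.filter (Disjoint · Y)) :=
    mem_insert_of_mem (mem_filter.2 ⟨hK, (hcomp K hK).resolve_left hKY⟩)
  exact hKY (Finset.card_le_one.1 hle K hKmem Y (mem_insert_self _ _)).le

lemma IsNested.exists_mem_forall_ssubset_notMem (hB : IsBuilding S B) (hM : IsNested B M)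
    (hA : A ∈ B) : ∃ i ∈ A, ∀ J ∈ M, J ⊂ A → i ∉ J := by
  set T := M.filter (· ⊂ A)
  suffices hT : ¬A ⊆ T.sup id by
    obtain ⟨i, hiA, hiT⟩ := not_subset.1 hT
    exact ⟨i, hiA, fun J hJM hJA hiJ => hiT (le_sup (f := id) (mem_filter.2 ⟨hJM, hJA⟩) hiJ)⟩
  intro hAT
  have hTA : T.sup id = A :=
    le_antisymm (Finset.sup_le fun J hJ => (mem_filter.1 hJ).2.subset) hAT
  have hTd : (Bmax T : Set (Finset ℕ)).PairwiseDisjoint id := by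
    refine pairwiseDisjoint_bmax fun I hI J hJ _ => ?_
    rcases hM.compatible (mem_filter.1 hI).1 (mem_filter.1 hJ).1 with h | h | h
    · rwa [union_eq_right.2 h]
    · rwa [union_eq_left.2 h]
    · contradiction
  have hcard := hM.card_le_one (F := Bmax T) ((filter_subset _ _).trans (filter_subset _ _)) hTd
    (by rwa [sup_bmax, hTA])
  obtain ⟨i, hi⟩ := hB.nonempty hA
  rw [← hTA, ← sup_bmax] at hi
  obtain ⟨Q, hQ, -⟩ := mem_sup.1 hi
  have hAQ : A ⊆ Q := by
    rw [← hTA, ← sup_bmax]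
    exact Finset.sup_le fun K hK => (Finset.card_le_one.1 hcard K hK Q hQ).le
  exact (mem_filter.1 (filter_subset _ _ hQ)).2.2 hAQ

lemma eVec_apply (n i : ℕ) (j : Fin n) :
    eVec n i j = (if i = j + 1 then 1 else 0) - (if i = n + 1 then 1 else 0) := by
  have := j.isLt
  unfold eVec
  split_ifs <;> first | omega | norm_num

lemma eSet_apply (n : ℕ) (J : Finset ℕ) (j : Fin n) :
    eSet n J j = (if (j : ℕ) + 1 ∈ J then 1 else 0) - (if n + 1 ∈ J then 1 else 0) := by
  simp only [eSet, Finset.sum_apply, eVec_apply, sum_sub_distrib, sum_ite_eq']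

lemma eSet_Icc (n : ℕ) : eSet n (Icc 1 (n + 1)) = 0 := by
  funext j
  have := j.isLt
  rw [eSet_apply, if_pos (by simp), if_pos (by simp)]
  simp

lemma eSet_union_add_eSet_inter (n : ℕ) (I J : Finset ℕ) :
    eSet n (I ∪ J) + eSet n (I ∩ J) = eSet n I + eSet n J :=
  sum_union_inter

lemma eSet_sup (hF : (F : Set (Finset ℕ)).PairwiseDisjoint id) :
    eSet n (F.sup id) = ∑ K ∈ F, eSet n K := by
  rw [sup_eq_biUnion, eSet, sum_biUnion hF]
  rfl

lemma sum_filter_mem_eq_of_sum_smul_eSet_eq_zero {c : Finset ℕ → ℝ}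
    (hc : ∑ J ∈ M, c J • eSet n J = 0) {i : ℕ} (hi : i ∈ Icc 1 (n + 1)) :
    ∑ J ∈ M with i ∈ J, c J = ∑ J ∈ M with n + 1 ∈ J, c J := by
  rw [mem_Icc] at hi
  rcases eq_or_lt_of_le hi.2 with rfl | hlt
  · rfl
  have := congrFun hc ⟨i - 1, by omega⟩
  simp only [Finset.sum_apply, Pi.smul_apply, eSet_apply, smul_eq_mul, mul_sub, mul_ite, mul_one,
    mul_zero, sum_sub_distrib, ← sum_filter, Pi.zero_apply, Nat.sub_add_cancel hi.1] at this
  exact sub_eq_zero.1 this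

/-- Coefficients are peeled off from the top: a maximal member has a point lying in no other
member. -/
lemma IsNested.eq_zero_of_sum_filter_mem_eq_zero (hB : IsBuilding S B) (hM : IsNested B M)
    {c : Finset ℕ → ℝ} (h : ∀ i, ∑ J ∈ M with i ∈ J, c J = 0) : ∀ J ∈ M, c J = 0 := by
  induction M using Finset.strongInduction with
  | H M ih =>
  intro J hJ
  obtain ⟨J₀, -, hJ₀⟩ := M.exists_le_maximal hJ
  obtain ⟨i₀, hi₀, hpriv⟩ := hM.exists_mem_forall_ssubset_notMem hB (hM.mem hJ₀.1)
  have honly : M.filter (i₀ ∈ ·) = {J₀} := by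
    refine eq_singleton_iff_unique_mem.2 ⟨mem_filter.2 ⟨hJ₀.1, hi₀⟩, fun K hK => ?_⟩
    obtain ⟨hKM, hiK⟩ := mem_filter.1 hK
    rcases hM.compatible hKM hJ₀.1 with h | h | h
    · by_contra hne
      exact hpriv K hKM (h.ssubset_of_ne hne) hiK
    · exact (hJ₀.eq_of_le hKM h).symm
    · exact absurd hi₀ (disjoint_left.1 h hiK)
  have hc₀ : c J₀ = 0 := by simpa [honly] using h i₀
  rcases eq_or_ne J J₀ with rfl | hne
  · exact hc₀
  refine ih _ (erase_ssubset hJ₀.1) (hM.mono (erase_subset _ _)) (fun i => ?_) J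
    (mem_erase.2 ⟨hne, hJ⟩)
  rw [filter_erase, sum_erase _ hc₀]
  exact h i

lemma IsNested.linearIndepOn_eSet (hB : IsBuilding (Icc 1 (n + 1)) B)
    (hconn : Bmax B = {Icc 1 (n + 1)}) (hM : IsNested B M) :
    LinearIndepOn ℝ (eSet n) (M : Set (Finset ℕ)) := by
  rw [linearIndepOn_finset_iff]
  intro c hc
  have hSB : Icc 1 (n + 1) ∈ B := mem_of_mem_filter _ (hconn ▸ mem_singleton_self _)
  have hsub : ∀ J ∈ M, J ⊂ Icc 1 (n + 1) := fun J hJ => by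
    have := hM.1 hJ
    rw [mem_sdiff, hconn, mem_singleton] at this
    exact (hB.1 J this.1).1.ssubset_of_ne this.2
  obtain ⟨i₀, hi₀, hfree⟩ := hM.exists_mem_forall_ssubset_notMem hB hSB
  refine hM.eq_zero_of_sum_filter_mem_eq_zero hB fun i => ?_
  by_cases hi : i ∈ Icc 1 (n + 1)
  · rw [sum_filter_mem_eq_of_sum_smul_eSet_eq_zero hc hi,
      ← sum_filter_mem_eq_of_sum_smul_eSet_eq_zero hc hi₀,
      filter_false_of_mem fun J hJ => hfree J hJ (hsub J hJ), sum_empty]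
  · rw [filter_false_of_mem fun J hJ hiJ => hi ((hsub J hJ).subset hiJ), sum_empty]

def CoeffSumLE (n : ℕ) (N : Finset (Finset ℕ)) (v : Fin n → ℝ) (w : ℝ) : Prop :=
  ∃ c : Finset ℕ → ℝ, ∑ J ∈ N, c J • eSet n J = v ∧ ∑ J ∈ N, c J ≤ w

lemma CoeffSumLE.add (h : CoeffSumLE n N v w) (h' : CoeffSumLE n N v' w') :
    CoeffSumLE n N (v + v') (w + w') := by
  obtain ⟨c, hc, hw⟩ := h
  obtain ⟨c', hc', hw'⟩ := h'
  refine ⟨c + c', ?_, ?_⟩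
  · simp only [Pi.add_apply, add_smul, sum_add_distrib, hc, hc']
  · simp only [Pi.add_apply, sum_add_distrib]
    linarith

lemma CoeffSumLE.mono (h : CoeffSumLE n N v w) (hw : w ≤ w') : CoeffSumLE n N v w' :=
  let ⟨c, hc, hcw⟩ := h
  ⟨c, hc, hcw.trans hw⟩

lemma coeffSumLE_sum_eSet (hT : T ⊆ N) : CoeffSumLE n N (∑ K ∈ T, eSet n K) T.card :=
  ⟨fun K => if K ∈ T then 1 else 0, by simp [ite_smul, sum_ite_mem, inter_eq_right.2 hT],
    by simp [sum_ite_mem, inter_eq_right.2 hT]⟩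

lemma coeffSumLE_neg_sum_eSet (hT : T ⊆ N) : CoeffSumLE n N (-∑ K ∈ T, eSet n K) 0 :=
  ⟨fun K => if K ∈ T then -1 else 0, by simp [ite_smul, sum_ite_mem, inter_eq_right.2 hT],
    by simp [sum_ite_mem, inter_eq_right.2 hT]⟩

lemma coeffSumLE_eSet_of_mem_or_eq (h : V ∈ N ∨ V = Icc 1 (n + 1)) :
    CoeffSumLE n N (eSet n V) 1 := by
  rcases h with h | rfl
  · simpa using coeffSumLE_sum_eSet (n := n) (singleton_subset_iff.2 h)
  · rw [eSet_Icc]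
    exact ⟨0, by simp, by simp⟩

lemma CoeffSumLE.sum_le (h : CoeffSumLE n N v w)
    (hind : LinearIndepOn ℝ (eSet n) (N : Set (Finset ℕ))) {c : Finset ℕ → ℝ}
    (hc : ∑ J ∈ N, c J • eSet n J = v) : ∑ J ∈ N, c J ≤ w := by
  obtain ⟨d, hd, hw⟩ := h
  have hcd := linearIndepOn_finset_iff.1 hind (c - d) (by simp [sub_smul, sum_sub_distrib, hc, hd])
  rwa [sum_congr rfl fun J hJ => sub_eq_zero.1 (hcd J hJ)]

def IsBlockExtension (B N R F : Finset (Finset ℕ)) : Prop :=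
  R ⊆ F ∧ F ⊆ N ∪ R ∧ (F : Set (Finset ℕ)).PairwiseDisjoint id ∧ F.sup id ∈ B

def IsMaxBlockExtension (B N R F : Finset (Finset ℕ)) : Prop :=
  IsBlockExtension B N R F ∧
    ∀ F', IsBlockExtension B N R F' → (F'.sup id).card ≤ (F.sup id).card

lemma exists_isMaxBlockExtension (h : ∃ F, IsBlockExtension B N R F) :
    ∃ F, IsMaxBlockExtension B N R F := by
  classical
  obtain ⟨F₀, hF₀⟩ := h
  obtain ⟨F, hF, hmax⟩ := ((N ∪ R).powerset.filter (IsBlockExtension B N R)).exists_max_image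
    (fun F => (F.sup id).card) ⟨F₀, mem_filter.2 ⟨mem_powerset.2 hF₀.2.1, hF₀⟩⟩
  exact ⟨F, (mem_filter.1 hF).2, fun F' hF' => hmax F' (mem_filter.2 ⟨mem_powerset.2 hF'.2.1, hF'⟩)⟩

lemma IsMaxBlockExtension.not_ssubset (hF : IsMaxBlockExtension B N R F) {F' : Finset (Finset ℕ)}
    (hF' : IsBlockExtension B N R F') : ¬F.sup id ⊂ F'.sup id :=
  fun h => (hF.2 F' hF').not_gt (card_lt_card h)

/-- If `J ∈ N` crossed the union of a maximal extension, then either `J` would enlarge it, or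
`J` and the members it misses would form a forbidden disjoint family in a nested set. -/
lemma IsMaxBlockExtension.compatible_sup (hB : IsBuilding S B) (hN : IsNested B N)
    (hR : ∀ A ∈ R, ∀ J ∈ N, Compatible A J) (hsub : ∀ R' ⊂ R, IsNested B (N ∪ R'))
    (hF : IsMaxBlockExtension B N R F) (hJ : J ∈ N) :
    Compatible (F.sup id) J := by
  obtain ⟨hRF, hFNR, hFd, hFB⟩ := hF.1
  by_contra hc
  simp only [Compatible, not_or] at hc
  obtain ⟨hVJ, hJV, hmeet⟩ := hc
  have hmeet' : ¬Disjoint J (F.sup id) := fun h => hmeet h.symm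
  have hsplit : ∀ K ∈ F, K ⊆ J ∨ Disjoint K J := fun K hK => by
    have hcomp : Compatible K J := by
      rcases mem_union.1 (hFNR hK) with h | h
      exacts [hN.compatible h hJ, hR K h J hJ]
    rcases hcomp with h | h | h
    exacts [Or.inl h, absurd (h.trans (le_sup (f := id) hK)) hJV, Or.inr h]
  by_cases hRJ : R.filter (Disjoint · J) = R
  · refine hF.not_ssubset (F' := insert J (F.filter (Disjoint · J))) ⟨fun A hA =>
      mem_insert_of_mem (mem_filter.2 ⟨hRF hA, filter_eq_self.1 hRJ A hA⟩),
      insert_subset (mem_union_left _ hJ) ((filter_subset _ _).trans hFNR),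
      pairwiseDisjoint_insert_filter_disjoint hFd J, ?_⟩ ?_
    · rw [sup_insert_filter_disjoint hsplit]
      exact hB.union_mem (hN.mem hJ) hFB hmeet'
    · rw [sup_insert_filter_disjoint hsplit]
      exact ⟨subset_union_right, fun h => hJV (subset_union_left.trans h)⟩
  · have hnest := hsub _ ((filter_subset _ _).ssubset_of_ne hRJ)
    refine hVJ (Finset.sup_le (hnest.forall_subset_of_sup_mem hB (mem_union_left _ hJ) hFd
      (fun K hK hKJ => ?_) hsplit hFB hmeet'))
    rcases mem_union.1 (hFNR hK) with h | h
    exacts [mem_union_left _ h, mem_union_right _ (mem_filter.2 ⟨h, hKJ⟩)]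

lemma IsMaxBlockExtension.sup_mem_or_mem_bmax (hB : IsBuilding S B) (hN : IsNested B N)
    (hR : ∀ A ∈ R, ∀ J ∈ N, Compatible A J) (hsub : ∀ R' ⊂ R, IsNested B (N ∪ R'))
    (hF : IsMaxBlockExtension B N R F)
    (hI : MaxNested B (insert I N)) (hIR : ∃ A ∈ R, I ⊆ A) :
    F.sup id ∈ insert I N ∨ F.sup id ∈ Bmax B := by
  by_cases hV : F.sup id ∈ Bmax B
  · exact Or.inr hV
  left
  obtain ⟨A, hA, hIA⟩ := hIR
  have hIV : I ⊆ F.sup id := hIA.trans (le_sup (f := id) (hF.1.1 hA))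
  refine hI.mem_of_isNested_insert (hI.1.insert_of_compatible (mem_sdiff.2 ⟨hF.1.2.2.2, hV⟩) ?_ ?_)
  · simp only [forall_mem_insert]
    exact ⟨Or.inr (Or.inl hIV), fun J hJ => hF.compatible_sup hB hN hR hsub hJ⟩
  intro G hG ⟨K, hK⟩ hGd hVG hGB
  have hKne : K.Nonempty := hB.nonempty (hI.1.mem (hG hK))
  have hGN : G ⊆ N := fun L hL => (mem_insert.1 (hG hL)).resolve_left fun hLI =>
    (hB.nonempty (hI.1.mem (hG hL))).ne_empty ((hVG L hL).symm.eq_bot_of_le (hLI ▸ hIV))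
  refine hF.not_ssubset (F' := F ∪ G) ⟨hF.1.1.trans subset_union_left,
    union_subset hF.1.2.1 (hGN.trans subset_union_left), ?_, by rwa [sup_union]⟩ ?_
  · rw [coe_union]
    exact hF.1.2.2.1.union hGd fun L hL L' hL' _ => (hVG L' hL').mono_left (le_sup (f := id) hL)
  · rw [sup_union]
    obtain ⟨x, hx⟩ := hKne
    exact ⟨subset_union_left, fun h => disjoint_left.1 (hVG K hK)
      (h (mem_union_right _ (le_sup (f := id) hK hx))) hx⟩

lemma coeffSumLE_sum_eSet_blocks (hB : IsBuilding (Icc 1 (n + 1)) B)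
    (hconn : Bmax B = {Icc 1 (n + 1)}) (hN : IsNested B N)
    (hR : ∀ A ∈ R, ∀ J ∈ N, Compatible A J) (hsub : ∀ R' ⊂ R, IsNested B (N ∪ R'))
    (hI : MaxNested B (insert I N)) (hIR : ∃ A ∈ R, I ⊆ A) (hRI : ∃ A ∈ R, ¬A ⊆ I)
    (hext : ∃ F, IsBlockExtension B N R F) :
    CoeffSumLE n N (∑ A ∈ R, eSet n A) 1 := by
  obtain ⟨F, hF⟩ := exists_isMaxBlockExtension hext
  have hV : F.sup id ∈ N ∨ F.sup id = Icc 1 (n + 1) := by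
    have := hF.sup_mem_or_mem_bmax hB hN hR hsub hI hIR
    rw [hconn, mem_insert, mem_singleton] at this
    obtain ⟨A, hA, hAI⟩ := hRI
    have hVI : F.sup id ≠ I := fun h => hAI (h ▸ le_sup (f := id) (hF.1.1 hA))
    tauto
  have hFR : F \ R ⊆ N := fun K hK =>
    (mem_union.1 (hF.1.2.1 (mem_sdiff.1 hK).1)).resolve_right (mem_sdiff.1 hK).2
  have hsum : ∑ A ∈ R, eSet n A = eSet n (F.sup id) + -∑ K ∈ F \ R, eSet n K := by
    rw [eSet_sup hF.1.2.2.1, ← sum_sdiff hF.1.1]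
    abel
  rw [hsum]
  exact ((coeffSumLE_eSet_of_mem_or_eq hV).add (coeffSumLE_neg_sum_eSet hFR)).mono (by norm_num)

lemma IsNested.sup_subset_of_union_sup_mem (hB : IsBuilding S B) (hM : IsNested B M) (hI : I ∈ M)
    (hQI : Q ⊆ I) (hQ : Q.Nonempty) (hGM : G ⊆ M)
    (hGd : (G : Set (Finset ℕ)).PairwiseDisjoint id) (hGQ : ∀ K ∈ G, Disjoint Q K)
    (hGB : Q ∪ G.sup id ∈ B) : G.sup id ⊆ I := by
  have hQI' : ¬Disjoint Q I := fun h => hQ.ne_empty (h.eq_bot_of_le hQI)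
  have hsup : (insert Q G).sup id = Q ∪ G.sup id := sup_insert
  have hHd : ((insert Q G : Finset (Finset ℕ)) : Set (Finset ℕ)).PairwiseDisjoint id := by
    rw [coe_insert]
    exact hGd.insert fun K hK _ => hGQ K hK
  have hall := hM.forall_subset_of_sup_mem hB hI hHd (fun K hK hKI => ?_) (fun K hK => ?_)
    (hsup ▸ hGB) (fun h => hQI' (h.mono_right (hsup ▸ le_sup (f := id) (mem_insert_self Q G))).symm)
  · exact Finset.sup_le fun K hK => hall K (mem_insert_of_mem hK)
  · rcases mem_insert.1 hK with rfl | hK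
    exacts [absurd hKI hQI', hGM hK]
  · rcases mem_insert.1 hK with rfl | hK
    · exact Or.inl hQI
    rcases hM.compatible (hGM hK) hI with h | h | h
    exacts [Or.inl h, absurd (hGQ K hK) fun hd => hQ.ne_empty (hd.eq_bot_of_le (hQI.trans h)),
      Or.inr h]

lemma compatible_of_mem_bmax_restrict_inter (hB : IsBuilding S B)
    (hQ : Q ∈ Bmax (restrict B (I₁ ∩ I₂))) (hJ : J ∈ B) (h₁ : Compatible J I₁)
    (h₂ : Compatible J I₂) : Compatible Q J := by
  obtain ⟨-, hQP⟩ := mem_restrict.1 (mem_filter.1 hQ).1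
  have hQ₁ : Q ⊆ I₁ := hQP.trans inter_subset_left
  have hQ₂ : Q ⊆ I₂ := hQP.trans inter_subset_right
  rcases h₁ with h₁ | h₁ | h₁
  · rcases h₂ with h₂ | h₂ | h₂
    · rcases subset_or_disjoint_of_mem_bmax_restrict hB hQ hJ (subset_inter h₁ h₂) with h | h
      exacts [Or.inr (Or.inl h), Or.inr (Or.inr h.symm)]
    · exact Or.inl (hQ₂.trans h₂)
    · exact Or.inr (Or.inr (h₂.symm.mono_left hQ₂))
  · exact Or.inl (hQ₁.trans h₁)
  · exact Or.inr (Or.inr (h₁.symm.mono_left hQ₁))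

/-- `N ∪ {I₁, Q}` is nested: a disjoint family `G` avoiding `Q` with `Q ∪ ⋃ G ∈ B` would be
absorbed into `I₁` and into `I₂`, hence into `I₁ ∩ I₂`, contradicting the maximality of `Q`. -/
lemma mem_of_mem_bmax_restrict_inter (hB : IsBuilding S B) (h₁ : MaxNested B (insert I₁ N))
    (h₂ : IsNested B (insert I₂ N)) (h₁₂ : ¬I₁ ⊆ I₂) (hQ : Q ∈ Bmax (restrict B (I₁ ∩ I₂))) :
    Q ∈ N := by
  obtain ⟨hQB, hQP⟩ := mem_restrict.1 (mem_filter.1 hQ).1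
  have hQ₁ : Q ⊆ I₁ := hQP.trans inter_subset_left
  have hQ₂ : Q ⊆ I₂ := hQP.trans inter_subset_right
  have hQne := hB.nonempty hQB
  have hQI₁ : Q ≠ I₁ := fun h => h₁₂ (h ▸ hQ₂)
  have hQB' : Q ∈ B \ Bmax B := mem_sdiff.2
    ⟨hQB, notMem_bmax_of_ssubset (h₁.1.mem (mem_insert_self _ _)) (hQ₁.ssubset_of_ne hQI₁)⟩
  refine (mem_insert.1 (h₁.mem_of_isNested_insert
    (h₁.1.insert_of_compatible hQB' ?_ ?_))).resolve_left hQI₁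
  · simp only [forall_mem_insert]
    exact ⟨Or.inl hQ₁, fun J hJ => compatible_of_mem_bmax_restrict_inter hB hQ
      (h₁.1.mem (mem_insert_of_mem hJ))
      (h₁.1.compatible (mem_insert_of_mem hJ) (mem_insert_self _ _))
      (h₂.compatible (mem_insert_of_mem hJ) (mem_insert_self _ _))⟩
  intro G hG ⟨K, hK⟩ hGd hQG hGB
  have hGN : G ⊆ N := fun L hL => (mem_insert.1 (hG hL)).resolve_left fun h =>
    hQne.ne_empty ((hQG L hL).eq_bot_of_le (h ▸ hQ₁))
  have hG₁ := h₁.1.sup_subset_of_union_sup_mem hB (mem_insert_self _ _) hQ₁ hQne hG hGd hQG hGB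
  have hG₂ := h₂.sup_subset_of_union_sup_mem hB (mem_insert_self _ _) hQ₂ hQne
    (hGN.trans (subset_insert _ _)) hGd hQG hGB
  have hU : Q ∪ G.sup id ∈ restrict B (I₁ ∩ I₂) :=
    mem_restrict.2 ⟨hGB, union_subset hQP (subset_inter hG₁ hG₂)⟩
  have hGQ : G.sup id ⊆ Q :=
    subset_union_right.trans ((mem_bmax_iff.1 hQ).eq_of_le hU subset_union_left).ge
  exact (hB.nonempty (h₁.1.mem (hG hK))).ne_empty
    ((hQG K hK).symm.eq_bot_of_le ((le_sup (f := id) hK).trans hGQ))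

lemma mem_and_mem_of_isNested_insert_insert (h₁ : MaxNested B (insert I₁ N))
    (h₂ : MaxNested B (insert I₂ N)) (hne : I₁ ≠ I₂) (h : IsNested B (insert I₂ (insert I₁ N))) :
    I₁ ∈ N ∧ I₂ ∈ N := by
  have hI₂ : I₂ ∈ N := (mem_insert.1 (h₁.mem_of_isNested_insert h)).resolve_left hne.symm
  refine ⟨(mem_insert.1 (h₂.mem_of_isNested_insert ?_)).resolve_left hne, hI₂⟩
  rw [insert_eq_of_mem hI₂]
  exact h₁.1

lemma isNested_union_of_ssubset_pair (h₁ : IsNested B (insert I₁ N))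
    (h₂ : IsNested B (insert I₂ N)) : ∀ R ⊂ ({I₁, I₂} : Finset (Finset ℕ)), IsNested B (N ∪ R) := by
  intro R hR
  have hmiss : I₁ ∉ R ∨ I₂ ∉ R := by
    by_contra! h
    exact hR.2 (insert_subset h.1 (singleton_subset_iff.2 h.2))
  rcases hmiss with h | h
  · refine h₂.mono (union_subset (subset_insert _ _) fun K hK => ?_)
    rcases mem_insert.1 (hR.1 hK) with rfl | hK'
    exacts [absurd hK h, mem_singleton.1 hK' ▸ mem_insert_self _ _]
  · refine h₁.mono (union_subset (subset_insert _ _) fun K hK => ?_)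
    rcases mem_insert.1 (hR.1 hK) with rfl | hK'
    exacts [mem_insert_self _ _, absurd (mem_singleton.1 hK' ▸ hK) h]

lemma exists_isBlockExtension_pair (h₁ : IsNested B (insert I₁ N)) (h₂ : IsNested B (insert I₂ N))
    (hc : Compatible I₁ I₂) (hnot : ¬IsNested B (insert I₂ (insert I₁ N))) :
    ∃ F, IsBlockExtension B N {I₁, I₂} F := by
  have hsub : insert I₂ (insert I₁ N) ⊆ B \ Bmax B :=
    insert_subset (h₂.1 (mem_insert_self _ _)) h₁.1
  have hcomp : ∀ I ∈ insert I₂ (insert I₁ N), ∀ J ∈ insert I₂ (insert I₁ N), Compatible I J := by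
    have c₁ : ∀ {I J}, I ∈ insert I₁ N → J ∈ insert I₁ N → Compatible I J := h₁.compatible
    have c₂ : ∀ {I J}, I ∈ insert I₂ N → J ∈ insert I₂ N → Compatible I J := h₂.compatible
    simp only [forall_mem_insert]
    refine ⟨⟨c₂ (mem_insert_self _ _) (mem_insert_self _ _), hc.symm,
        fun J hJ => c₂ (mem_insert_self _ _) (mem_insert_of_mem hJ)⟩,
      ⟨hc, c₁ (mem_insert_self _ _) (mem_insert_self _ _),
        fun J hJ => c₁ (mem_insert_self _ _) (mem_insert_of_mem hJ)⟩,
      fun I hI => ⟨c₂ (mem_insert_of_mem hI) (mem_insert_self _ _),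
        c₁ (mem_insert_of_mem hI) (mem_insert_self _ _),
        fun J hJ => c₁ (mem_insert_of_mem hI) (mem_insert_of_mem hJ)⟩⟩
  have hbad : ¬∀ F ⊆ insert I₂ (insert I₁ N), (F : Set (Finset ℕ)).PairwiseDisjoint id →
      F.sup id ∈ B → F.card ≤ 1 :=
    fun h => hnot (isNested_iff.2 ⟨hsub, hcomp, h⟩)
  simp only [not_forall, not_le, exists_prop] at hbad
  obtain ⟨F, hFM, hFd, hFB, hF2⟩ := hbad
  have hI₁F : I₁ ∈ F := by
    by_contra h
    refine (h₂.card_le_one (fun K hK => ?_) hFd hFB).not_gt hF2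
    rcases mem_insert.1 (hFM hK) with rfl | hK'
    · exact mem_insert_self _ _
    · exact mem_insert_of_mem ((mem_insert.1 hK').resolve_left fun hKI => h (hKI ▸ hK))
  have hI₂F : I₂ ∈ F := by
    by_contra h
    exact (h₁.card_le_one (fun K hK => (mem_insert.1 (hFM hK)).resolve_left fun hKI => h (hKI ▸ hK))
      hFd hFB).not_gt hF2
  refine ⟨F, insert_subset hI₁F (singleton_subset_iff.2 hI₂F), fun K hK => ?_, hFd, hFB⟩
  have := hFM hK
  simp only [mem_insert, mem_union, mem_singleton] at this ⊢
  tauto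

lemma coeffSumLE_of_compatible (hB : IsBuilding (Icc 1 (n + 1)) B)
    (hconn : Bmax B = {Icc 1 (n + 1)}) (h₁ : MaxNested B (insert I₁ N))
    (h₂ : MaxNested B (insert I₂ N)) (hne : I₁ ≠ I₂) (hc : Compatible I₁ I₂)
    (hnot : ¬IsNested B (insert I₂ (insert I₁ N))) :
    CoeffSumLE n N (eSet n I₁ + eSet n I₂) 2 := by
  obtain ⟨F, hF⟩ := exists_isBlockExtension_pair h₁.1 h₂.1 hc hnot
  have hdisj : Disjoint I₁ I₂ := hF.2.2.1 (hF.1 (by simp)) (hF.1 (by simp)) hne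
  have hI₂ne := hB.nonempty (h₂.1.mem (mem_insert_self _ _))
  have hR : ∀ A ∈ ({I₁, I₂} : Finset (Finset ℕ)), ∀ J ∈ N, Compatible A J := by
    simp only [mem_insert, mem_singleton, forall_eq_or_imp, forall_eq]
    exact ⟨fun J hJ => h₁.1.compatible (mem_insert_self _ _) (mem_insert_of_mem hJ),
      fun J hJ => h₂.1.compatible (mem_insert_self _ _) (mem_insert_of_mem hJ)⟩
  rw [← sum_pair hne]
  exact (coeffSumLE_sum_eSet_blocks hB hconn (h₁.1.mono (subset_insert _ _)) hR
    (isNested_union_of_ssubset_pair h₁.1 h₂.1) h₁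
    ⟨I₁, by simp, subset_rfl⟩ ⟨I₂, by simp, fun h => hI₂ne.ne_empty (hdisj.symm.eq_bot_of_le h)⟩
    ⟨F, hF⟩).mono (by norm_num)

lemma coeffSumLE_of_not_compatible (hB : IsBuilding (Icc 1 (n + 1)) B)
    (hconn : Bmax B = {Icc 1 (n + 1)}) (h₁ : MaxNested B (insert I₁ N))
    (h₂ : MaxNested B (insert I₂ N)) (hc : ¬Compatible I₁ I₂)
    (hcond : I₁ ∩ I₂ ∈ B ∨
      (I₁ ∪ I₂ = Icc 1 (n + 1) ∧ (Bmax (restrict B (I₁ ∩ I₂))).card ≤ 2)) :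
    CoeffSumLE n N (eSet n I₁ + eSet n I₂) 2 := by
  simp only [Compatible, not_or] at hc
  obtain ⟨h₁₂, h₂₁, hmeet⟩ := hc
  have hI₁B := h₁.1.mem (mem_insert_self _ _)
  have hI₂B := h₂.1.mem (mem_insert_self _ _)
  have hQN : Bmax (restrict B (I₁ ∩ I₂)) ⊆ N := fun Q hQ =>
    mem_of_mem_bmax_restrict_inter hB h₁ h₂.1 h₁₂ hQ
  rw [← eSet_union_add_eSet_inter]
  rcases hcond with hP | ⟨hU, hcard⟩
  · have hR : ∀ A ∈ ({I₁ ∪ I₂} : Finset (Finset ℕ)), ∀ J ∈ N, Compatible A J := by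
      simp only [mem_singleton, forall_eq]
      exact fun J hJ => (h₁.1.compatible (mem_insert_self _ _) (mem_insert_of_mem hJ)).union
        (h₂.1.compatible (mem_insert_self _ _) (mem_insert_of_mem hJ)) hmeet
    have hsub : ∀ R' ⊂ ({I₁ ∪ I₂} : Finset (Finset ℕ)), IsNested B (N ∪ R') := fun R' hR' => by
      rw [ssubset_singleton_iff.1 hR', union_empty]
      exact h₁.1.mono (subset_insert _ _)
    have hext : IsBlockExtension B N {I₁ ∪ I₂} {I₁ ∪ I₂} :=
      ⟨subset_rfl, subset_union_right, by simp, by simpa using hB.union_mem hI₁B hI₂B hmeet⟩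
    have hU := coeffSumLE_sum_eSet_blocks (n := n) hB hconn (h₁.1.mono (subset_insert _ _)) hR hsub
      h₁ ⟨_, mem_singleton_self _, subset_union_left⟩
      ⟨_, mem_singleton_self _, fun h => h₂₁ (subset_union_right.trans h)⟩ ⟨_, hext⟩
    rw [sum_singleton] at hU
    exact (hU.add (coeffSumLE_eSet_of_mem_or_eq (Or.inl (hQN (mem_bmax_restrict_self hP))))).mono
      (by norm_num)
  · rw [hU, eSet_Icc, zero_add,
      ← sup_bmax_restrict hB (inter_subset_left.trans (hB.1 I₁ hI₁B).1),
      eSet_sup (pairwiseDisjoint_bmax_restrict hB)]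
    exact (coeffSumLE_sum_eSet hQN).mono (by exact_mod_cast hcard)

end

theorem stmt_1_general (n : ℕ) (B : Finset (Finset ℕ))
    (hB : IsBuilding (Finset.Icc 1 (n + 1)) B)
    (hconn : Bmax B = {Finset.Icc 1 (n + 1)})
    (hcond : ∀ I₁ ∈ B, ∀ I₂ ∈ B, (I₁ ∩ I₂).Nonempty → ¬I₁ ⊆ I₂ → ¬I₂ ⊆ I₁ →
      (I₁ ∩ I₂ ∈ B ∨ (I₁ ∪ I₂ = Finset.Icc 1 (n + 1) ∧
        (Bmax (restrict B (I₁ ∩ I₂))).card ≤ 2)))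
    (N : Finset (Finset ℕ)) (hN : IsNested B N)
    (I₁ I₂ : Finset ℕ) (hI₁ : I₁ ∈ B) (hI₂ : I₂ ∈ B) (hne : I₁ ≠ I₂)
    (hmax₁ : MaxNested B (insert I₁ N)) (hmax₂ : MaxNested B (insert I₂ N))
    (a : Finset ℕ → ℤ)
    (heq : eSet n I₁ + eSet n I₂ + ∑ J ∈ N, (a J : ℝ) • eSet n J = 0) :
    0 ≤ 2 + ∑ J ∈ N, a J := by
  have hrel : CoeffSumLE n N (eSet n I₁ + eSet n I₂) 2 := by
    by_cases hnest : IsNested B (insert I₂ (insert I₁ N))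
    · obtain ⟨h₁, h₂⟩ := mem_and_mem_of_isNested_insert_insert hmax₁ hmax₂ hne hnest
      rw [← sum_pair hne]
      exact (coeffSumLE_sum_eSet (insert_subset h₁ (singleton_subset_iff.2 h₂))).mono
        (by simp [card_pair hne])
    by_cases hc : Compatible I₁ I₂
    · exact coeffSumLE_of_compatible hB hconn hmax₁ hmax₂ hne hc hnest
    obtain ⟨h₁₂, h₂₁, hmeet⟩ : ¬I₁ ⊆ I₂ ∧ ¬I₂ ⊆ I₁ ∧ ¬Disjoint I₁ I₂ := by
      simpa only [Compatible, not_or] using hc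
    exact coeffSumLE_of_not_compatible hB hconn hmax₁ hmax₂ hc
      (hcond I₁ hI₁ I₂ hI₂ (not_disjoint_iff_nonempty_inter.1 hmeet) h₁₂ h₂₁)
  have hle := hrel.sum_le (hN.linearIndepOn_eSet hB hconn) (c := fun J => -(a J : ℝ))
    (by simp only [neg_smul, sum_neg_distrib]; exact (eq_neg_of_add_eq_zero_left heq).symm)
  have : (0 : ℝ) ≤ 2 + ∑ J ∈ N, (a J : ℝ) := by
    simp only [sum_neg_distrib] at hle
    linarith
  exact_mod_cast this

/-- Direction (2) ⇒ (1) of the main theorem, combinatorially: if the building-set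
condition holds, every torus-invariant curve has nonnegative anticanonical degree. -/
theorem stmt_1 (n : ℕ) (B : Finset (Finset ℕ))
    (hB : IsBuilding (Finset.Icc 1 (n + 1)) B)
    (hconn : Bmax B = {Finset.Icc 1 (n + 1)})
    (hcond : ∀ I₁ ∈ B, ∀ I₂ ∈ B, (I₁ ∩ I₂).Nonempty → ¬I₁ ⊆ I₂ → ¬I₂ ⊆ I₁ →
      (I₁ ∩ I₂ ∈ B ∨ (I₁ ∪ I₂ = Finset.Icc 1 (n + 1) ∧
        (Bmax (restrict B (I₁ ∩ I₂))).card ≤ 2)))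
    (N : Finset (Finset ℕ)) (hN : IsNested B N)
    (I₁ I₂ : Finset ℕ) (hI₁ : I₁ ∈ B) (hI₂ : I₂ ∈ B) (hne : I₁ ≠ I₂)
    (hI₁S : I₁ ≠ Finset.Icc 1 (n + 1)) (hI₂S : I₂ ≠ Finset.Icc 1 (n + 1))
    (hmax₁ : MaxNested B (insert I₁ N)) (hmax₂ : MaxNested B (insert I₂ N))
    (a : Finset ℕ → ℤ)
    (heq : eSet n I₁ + eSet n I₂ + ∑ J ∈ N, (a J : ℝ) • eSet n J = 0) :
    0 ≤ 2 + ∑ J ∈ N, a J :=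
  stmt_1_general n B hB hconn hcond N hN I₁ I₂ hI₁ hI₂ hne hmax₁ hmax₂ a heq
end
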